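/- (Novikov-Kazamaki orders.) For a ∈ ℝ and a measurable function φ, let NK^φ(a) denote the class of continuous local martingales L on [0,T_0) with L_0 = 0 for which sup_{τ ∈ 𝒯} E[ S^{L,a,φ}_τ ] < ∞. Then for any real numbers a < b < 1 < c < d and any continuous lower function φ, one has NK^φ(a) ⊆ NK^φ(b) and NK^φ(d) ⊆ NK^φ(c). -/

import Mathlib

open MeasureTheory ProbabilityTheory Filter Set
open scoped NNReal ENNReal

noncomputable section

namespace PaperNK

variable {Ω : Type*} {m : MeasurableSpace Ω}

/-- A (real-valued) process is a local martingale if there is a localizing sequence of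
stopping times increasing to infinity such that every stopped process is a martingale. -/
def IsLocalMartingale (ℱ : Filtration ℝ≥0 m) (μ : Measure Ω) (X : ℝ≥0 → Ω → ℝ) : Prop :=
  ∃ σ : ℕ → Ω → ℝ≥0,
    (∀ n, IsStoppingTime ℱ (fun ω => (σ n ω : WithTop ℝ≥0))) ∧
    (∀ ω, Tendsto (fun n => σ n ω) atTop atTop) ∧
    (∀ n, Martingale (stoppedProcess X (fun ω => (σ n ω : WithTop ℝ≥0))) ℱ μ)

/-- `X` is a local martingale on the stochastic interval `[0, ρ)`: for every stopping
time `σ` with `σ < ρ` everywhere, the stopped process `X^σ` is a local martingale. -/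
def IsLocalMartingaleOn (ℱ : Filtration ℝ≥0 m) (μ : Measure Ω)
    (X : ℝ≥0 → Ω → ℝ) (ρ : Ω → ℝ≥0∞) : Prop :=
  ∀ σ : Ω → ℝ≥0, IsStoppingTime ℱ (fun ω => (σ ω : WithTop ℝ≥0)) → (∀ ω, (σ ω : ℝ≥0∞) < ρ ω) →
    IsLocalMartingale ℱ μ (stoppedProcess X (fun ω => (σ ω : WithTop ℝ≥0)))

/-- All paths of `X` are continuous on the stochastic interval `[0, ρ)`. -/
def ContPathsOn (X : ℝ≥0 → Ω → ℝ) (ρ : Ω → ℝ≥0∞) : Prop :=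
  ∀ ω, ContinuousOn (fun t => X t ω) {t : ℝ≥0 | (t : ℝ≥0∞) < ρ ω}

/-- `Q` is the quadratic variation `⟨L⟩` of the continuous local martingale `L` on the
stochastic interval `[0, ρ)`: it starts at `0`, is adapted, nondecreasing and continuous
on `[0, ρ)`, and `L ^ 2 - Q` is a local martingale on `[0, ρ)`. -/
def IsQuadraticVariationOn (ℱ : Filtration ℝ≥0 m) (μ : Measure Ω)
    (L Q : ℝ≥0 → Ω → ℝ) (ρ : Ω → ℝ≥0∞) : Prop :=
  (∀ ω, Q 0 ω = 0) ∧ Adapted ℱ Q ∧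
    (∀ ω, MonotoneOn (fun t => Q t ω) {t : ℝ≥0 | (t : ℝ≥0∞) < ρ ω}) ∧
    ContPathsOn Q ρ ∧
    IsLocalMartingaleOn ℱ μ (fun t ω => L t ω ^ 2 - Q t ω) ρ

/-- First hitting time of the level `c` by the process `X` (with value `∞` if `c` is never hit). -/
def firstHit (X : ℝ≥0 → Ω → ℝ) (c : ℝ) (ω : Ω) : ℝ≥0∞ :=
  sInf {t : ℝ≥0∞ | ∃ s : ℝ≥0, (s : ℝ≥0∞) = t ∧ X s ω = c}

/-- The data of a continuous nonnegative local martingale `Z = 𝓔(L) = exp (L - Q / 2)` with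
`Z_0 = 1`, where `L` is a continuous local martingale on `[0, T_0)` with `L_0 = 0`, `Q = ⟨L⟩`
is its quadratic variation, and `T_0` is the first hitting time of zero by `Z`; `Z` is
extended continuously (by the value `0`) after `T_0`. -/
structure StochExpSetup (ℱ : Filtration ℝ≥0 m) (μ : Measure Ω)
    (L Q Z : ℝ≥0 → Ω → ℝ) : Prop where
  nonneg : ∀ (t : ℝ≥0) (ω : Ω), 0 ≤ Z t ω
  init : ∀ ω : Ω, Z 0 ω = 1
  contZ : ∀ ω : Ω, Continuous fun t => Z t ω
  adaptedZ : Adapted ℱ Z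
  locmartZ : IsLocalMartingale ℱ μ Z
  initL : ∀ ω : Ω, L 0 ω = 0
  locmartL : IsLocalMartingaleOn ℱ μ L fun ω => firstHit Z 0 ω
  contL : ContPathsOn L fun ω => firstHit Z 0 ω
  quadvar : IsQuadraticVariationOn ℱ μ L Q fun ω => firstHit Z 0 ω
  expEq : ∀ (t : ℝ≥0) (ω : Ω), (t : ℝ≥0∞) < firstHit Z 0 ω →
    Z t ω = Real.exp (L t ω - Q t ω / 2)
  absorbed : ∀ (t : ℝ≥0) (ω : Ω), firstHit Z 0 ω ≤ (t : ℝ≥0∞) → Z t ω = 0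

/-- The class `𝒯` of stopping times: `τ ∈ 𝒯` iff `τ ≤ (T - 1/n) ⊓ n` for some `n ∈ ℕ`. -/
def MemT (ℱ : Filtration ℝ≥0 m) (T : ℝ≥0∞) (τ : Ω → ℝ≥0) : Prop :=
  IsStoppingTime ℱ (fun ω => (τ ω : WithTop ℝ≥0)) ∧ ∃ n : ℕ, 0 < n ∧ ∀ ω, (τ ω : ℝ≥0∞) ≤ (T - 1 / n) ⊓ n

/-- `Z` is a (true) martingale on the time interval `[0, T]`. -/
def IsMartingaleOn (ℱ : Filtration ℝ≥0 m) (μ : Measure Ω)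
    (Z : ℝ≥0 → Ω → ℝ) (T : ℝ≥0∞) : Prop :=
  (∀ t : ℝ≥0, (t : ℝ≥0∞) ≤ T → Integrable (Z t) μ ∧ StronglyMeasurable[ℱ t] (Z t)) ∧
  ∀ s t : ℝ≥0, s ≤ t → (t : ℝ≥0∞) ≤ T → μ[Z t|ℱ s] =ᵐ[μ] Z s

/-- `Z` is a uniformly integrable martingale on the time interval `[0, T]`. -/
def IsUIMartingaleOn (ℱ : Filtration ℝ≥0 m) (μ : Measure Ω)
    (Z : ℝ≥0 → Ω → ℝ) (T : ℝ≥0∞) : Prop :=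
  IsMartingaleOn ℱ μ Z T ∧
  UniformIntegrable (fun t : {t : ℝ≥0 // (t : ℝ≥0∞) ≤ T} => Z t.1) 1 μ

/-- `X` is a submartingale on the time interval `[0, T]`. -/
def IsSubmartingaleOn (ℱ : Filtration ℝ≥0 m) (μ : Measure Ω)
    (X : ℝ≥0 → Ω → ℝ) (T : ℝ≥0∞) : Prop :=
  (∀ t : ℝ≥0, (t : ℝ≥0∞) ≤ T → Integrable (X t) μ ∧ StronglyMeasurable[ℱ t] (X t)) ∧
  ∀ s t : ℝ≥0, s ≤ t → (t : ℝ≥0∞) ≤ T → X s ≤ᵐ[μ] μ[X t|ℱ s]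

/-- `B` is a Brownian motion (starting at zero) under `μ`: continuous paths, independent
increments, and Gaussian increments `B_t - B_s ~ N(0, t - s)`. -/
structure IsBrownianMotion {Ω' : Type*} [MeasurableSpace Ω'] (μ : Measure Ω')
    (B : ℝ≥0 → Ω' → ℝ) : Prop where
  isProb : IsProbabilityMeasure μ
  meas : ∀ t, Measurable (B t)
  start : ∀ ω, B 0 ω = 0
  cont : ∀ ω, Continuous fun t => B t ω
  indepIncr : ∀ (n : ℕ) (t : Fin (n + 1) → ℝ≥0), Monotone t →
    iIndepFun
      (fun i : Fin n => fun ω => B (t i.succ) ω - B (t i.castSucc) ω) μ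
  gaussIncr : ∀ s t : ℝ≥0, s ≤ t →
    μ.map (fun ω => B t ω - B s ω) = gaussianReal 0 (t - s)

/-- A continuous function `φ` (on `[0,∞)`) is a lower function iff
`limsup_{t → ∞} (B_t - φ(t)) = ∞` almost surely for every Brownian motion `B`. -/
def IsLowerFunction (φ : ℝ → ℝ) : Prop :=
  ∀ (Ω' : Type) [MeasurableSpace Ω'] (μ' : Measure Ω') (B : ℝ≥0 → Ω' → ℝ),
    IsBrownianMotion μ' B →
    ∀ᵐ ω ∂μ', ∀ c : ℝ, ∃ᶠ t : ℝ≥0 in atTop, c < B t ω - φ (t : ℝ)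

/-- The process `S^{L,a,φ} = exp (a L + (1/2 - a) ⟨L⟩ - |a-1| φ(⟨L⟩)) 1_{Z > 0}`. -/
def Sproc (L Q Z : ℝ≥0 → Ω → ℝ) (a : ℝ) (φ : ℝ → ℝ) (t : ℝ≥0) (ω : Ω) : ℝ :=
  if 0 < Z t ω then Real.exp (a * L t ω + (1 / 2 - a) * Q t ω - |a - 1| * φ (Q t ω)) else 0

/-- The Novikov-Kazamaki condition `sup_{τ ∈ 𝒯} E[S^{L,a,φ}_τ] < ∞`. -/
def NKCond (ℱ : Filtration ℝ≥0 m) (μ : Measure Ω) (L Q Z : ℝ≥0 → Ω → ℝ)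
    (T : ℝ≥0∞) (a : ℝ) (φ : ℝ → ℝ) : Prop :=
  (⨆ τ : {τ : Ω → ℝ≥0 // MemT ℱ T τ},
    ∫⁻ ω, ENNReal.ofReal (Sproc L Q Z a φ (τ.1 ω) ω) ∂μ) < ⊤

/-- A Brownian motion with respect to the filtration `ℱ`: it is adapted and its
increments are independent of the past. -/
structure IsBrownianMotionFiltered (ℱ : Filtration ℝ≥0 m) (μ : Measure Ω)
    (B : ℝ≥0 → Ω → ℝ) : Prop extends IsBrownianMotion μ B where
  adapted : Adapted ℱ B
  indepPast : ∀ s t : ℝ≥0, s ≤ t →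
    Indep (MeasurableSpace.comap (fun ω => B t ω - B s ω) inferInstance) (ℱ s) μ


/-!
Write `x = a L + (1/2 - a) ⟨L⟩ - |a - 1| φ(⟨L⟩)` and `y = L - ⟨L⟩/2`, so that on `{Z > 0}` we have
`S^{L,a,φ} = exp x` and `Z = exp y`. If `e` lies between `1` and `a`, say `e - 1 = θ (a - 1)` with
`θ ∈ [0, 1]`, then the exponent of `S^{L,e,φ}` is exactly `θ x + (1 - θ) y`, so convexity of `exp`
gives `S^{L,e,φ} ≤ θ S^{L,a,φ} + (1 - θ) Z` pointwise. Since `Z` is a nonnegative local martingale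
with `Z_0 = 1`, `E[Z_τ] ≤ 1` at every bounded stopping time (optional sampling along dyadic
approximations of `τ` and a localizing sequence, then Fatou twice), and the supremum over `𝒯`
of `E[S^{L,e,φ}_τ]` is at most `θ sup E[S^{L,a,φ}_τ] + 1 - θ`.
-/

open scoped Topology

theorem lintegral_le_of_tendsto_of_forall_le {α : Type*} [MeasurableSpace α] {μ : Measure α}
    {f : ℕ → α → ℝ≥0∞} {g : α → ℝ≥0∞} {C : ℝ≥0∞} (hf : ∀ n, Measurable (f n))
    (hfg : ∀ x, Tendsto (fun n => f n x) atTop (𝓝 (g x))) (hC : ∀ n, ∫⁻ x, f n x ∂μ ≤ C) :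
    ∫⁻ x, g x ∂μ ≤ C :=
  calc ∫⁻ x, g x ∂μ = ∫⁻ x, liminf (fun n => f n x) atTop ∂μ :=
        lintegral_congr fun x => (hfg x).liminf_eq.symm
    _ ≤ liminf (fun n => ∫⁻ x, f n x ∂μ) atTop := lintegral_liminf_le hf
    _ ≤ C := liminf_le_of_frequently_le' (Frequently.of_forall hC)

section DyadicCeil

/-- Rounding up (not down) keeps `dyadicCeil τ k` a stopping time; its countable range is what
the optional sampling theorem for continuous time requires. -/
def dyadicCeil (τ : Ω → ℝ≥0) (k : ℕ) (ω : Ω) : ℝ≥0 :=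
  ⌈τ ω * 2 ^ k⌉₊ / 2 ^ k

variable (τ : Ω → ℝ≥0) (k : ℕ) (ω : Ω)

lemma le_dyadicCeil : τ ω ≤ dyadicCeil τ k ω :=
  (le_div_iff₀ (by positivity)).2 (Nat.le_ceil _)

lemma dyadicCeil_le_add : dyadicCeil τ k ω ≤ τ ω + (2 ^ k)⁻¹ := by
  rw [dyadicCeil, div_le_iff₀ (by positivity), add_mul, inv_mul_cancel₀ (by positivity)]
  exact (Nat.ceil_lt_add_one zero_le).le

lemma tendsto_dyadicCeil : Tendsto (fun k => dyadicCeil τ k ω) atTop (𝓝 (τ ω)) := by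
  have h : Tendsto (fun k : ℕ => τ ω + (2 ^ k)⁻¹) atTop (𝓝 (τ ω)) := by
    simpa [inv_pow] using (tendsto_const_nhds (x := τ ω)).add
      (NNReal.tendsto_pow_atTop_nhds_zero_of_lt_one (r := 2⁻¹) (by norm_num))
  exact tendsto_of_tendsto_of_tendsto_of_le_of_le tendsto_const_nhds h
    (le_dyadicCeil τ · ω) (dyadicCeil_le_add τ · ω)

lemma countable_range_dyadicCeil :
    (range fun ω => (dyadicCeil τ k ω : WithTop ℝ≥0)).Countable :=
  (countable_range fun j : ℕ => ((j / 2 ^ k : ℝ≥0) : WithTop ℝ≥0)).mono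
    (by rintro _ ⟨ω, rfl⟩; exact ⟨_, rfl⟩)

variable {τ} in
lemma isStoppingTime_dyadicCeil {ℱ : Filtration ℝ≥0 m}
    (hτ : IsStoppingTime ℱ fun ω => (τ ω : WithTop ℝ≥0)) :
    IsStoppingTime ℱ fun ω => (dyadicCeil τ k ω : WithTop ℝ≥0) := by
  intro t
  have hset : {ω | (dyadicCeil τ k ω : WithTop ℝ≥0) ≤ t} =
      {ω | (τ ω : WithTop ℝ≥0) ≤ ((⌊t * 2 ^ k⌋₊ / 2 ^ k : ℝ≥0) : WithTop ℝ≥0)} := by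
    ext ω
    simp only [mem_ofPred_eq, WithTop.coe_le_coe, dyadicCeil]
    rw [div_le_iff₀ (by positivity), le_div_iff₀ (by positivity),
      ← Nat.le_floor_iff zero_le, Nat.ceil_le]
  rw [hset]
  exact ℱ.mono ((div_le_iff₀ (by positivity)).2 (Nat.floor_le zero_le)) _ (hτ _)

end DyadicCeil

section OptionalSampling

variable {ℱ : Filtration ℝ≥0 m} {μ : Measure Ω}

lemma measurable_apply_of_isStoppingTime {Z : ℝ≥0 → Ω → ℝ} (hZ : Adapted ℱ Z)
    (hcont : ∀ ω, Continuous fun t => Z t ω) {τ : Ω → ℝ≥0}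
    (hτ : IsStoppingTime ℱ fun ω => (τ ω : WithTop ℝ≥0)) :
    Measurable fun ω => Z (τ ω) ω :=
  (measurable_stoppedValue (hZ.stronglyAdapted.isStronglyProgressive_of_continuous hcont)
    hτ).mono hτ.measurableSpace_le le_rfl

theorem _root_.MeasureTheory.Martingale.lintegral_ofReal_stoppedValue_eq [IsFiniteMeasure μ]
    {M : ℝ≥0 → Ω → ℝ} (hM : Martingale M ℱ μ) (hM_nonneg : ∀ t ω, 0 ≤ M t ω)
    {τ : Ω → WithTop ℝ≥0} (hτ : IsStoppingTime ℱ τ) {n : ℝ≥0} (hτn : ∀ ω, τ ω ≤ n)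
    (hτ_countable : (range τ).Countable) :
    ∫⁻ ω, ENNReal.ofReal (stoppedValue M τ ω) ∂μ = ∫⁻ ω, ENNReal.ofReal (M 0 ω) ∂μ := by
  have hsample :=
    hM.stoppedValue_ae_eq_condExp_of_le_const_of_countable_range hτ hτn hτ_countable
  calc ∫⁻ ω, ENNReal.ofReal (stoppedValue M τ ω) ∂μ
      = ∫⁻ ω, ENNReal.ofReal (μ[M n|hτ.measurableSpace] ω) ∂μ :=
        lintegral_congr_ae (hsample.fun_comp ENNReal.ofReal)
    _ = ENNReal.ofReal (∫ ω, M n ω ∂μ) := by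
        rw [← integral_condExp (hτ.measurableSpace_le_of_le hτn),
          ofReal_integral_eq_lintegral_ofReal integrable_condExp
            (condExp_nonneg (ae_of_all _ (hM_nonneg n)))]
    _ = ENNReal.ofReal (∫ ω, M 0 ω ∂μ) := by
        rw [← integral_condExp (ℱ.le 0), integral_congr_ae (hM.condExp_ae_eq zero_le)]
    _ = ∫⁻ ω, ENNReal.ofReal (M 0 ω) ∂μ :=
        ofReal_integral_eq_lintegral_ofReal (hM.integrable 0) (ae_of_all _ (hM_nonneg 0))

theorem IsLocalMartingale.lintegral_ofReal_apply_le [IsFiniteMeasure μ] {Z : ℝ≥0 → Ω → ℝ}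
    (hZ : IsLocalMartingale ℱ μ Z) (hZ_adapted : Adapted ℱ Z)
    (hcont : ∀ ω, Continuous fun t => Z t ω) (hZ_nonneg : ∀ t ω, 0 ≤ Z t ω)
    {τ : Ω → ℝ≥0} (hτ : IsStoppingTime ℱ fun ω => (τ ω : WithTop ℝ≥0)) {n : ℝ≥0}
    (hτn : ∀ ω, τ ω ≤ n) :
    ∫⁻ ω, ENNReal.ofReal (Z (τ ω) ω) ∂μ ≤ ∫⁻ ω, ENNReal.ofReal (Z 0 ω) ∂μ := by
  obtain ⟨σ, hσ, hσ_top, hσ_mart⟩ := hZ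
  have hmeas : ∀ {ρ : Ω → ℝ≥0}, IsStoppingTime ℱ (fun ω => (ρ ω : WithTop ℝ≥0)) → ∀ k,
      Measurable fun ω => ENNReal.ofReal (Z (min (ρ ω) (σ k ω)) ω) := fun hρ k =>
    (measurable_apply_of_isStoppingTime hZ_adapted hcont
      (by simpa only [WithTop.coe_min] using hρ.min (hσ k))).ennreal_ofReal
  have hdyadic : ∀ j k, ∫⁻ ω, ENNReal.ofReal (Z (min (dyadicCeil τ j ω) (σ k ω)) ω) ∂μ
      = ∫⁻ ω, ENNReal.ofReal (Z 0 ω) ∂μ := fun j k => by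
    have hbound : ∀ ω, (dyadicCeil τ j ω : WithTop ℝ≥0) ≤ (n + 1 : ℝ≥0) := fun ω =>
      WithTop.coe_le_coe.2 <| (dyadicCeil_le_add τ j ω).trans <|
        add_le_add (hτn ω) (inv_le_one_of_one_le₀ (one_le_pow₀ one_le_two))
    calc ∫⁻ ω, ENNReal.ofReal (Z (min (dyadicCeil τ j ω) (σ k ω)) ω) ∂μ
        = ∫⁻ ω, ENNReal.ofReal (stoppedValue (stoppedProcess Z fun ω => (σ k ω : WithTop ℝ≥0))
            (fun ω => (dyadicCeil τ j ω : WithTop ℝ≥0)) ω) ∂μ :=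
          lintegral_congr fun ω => by
            simp only [stoppedValue, stoppedProcess, ← WithTop.coe_min]; rfl
      _ = ∫⁻ ω, ENNReal.ofReal (stoppedProcess Z (fun ω => (σ k ω : WithTop ℝ≥0)) 0 ω) ∂μ :=
          (hσ_mart k).lintegral_ofReal_stoppedValue_eq (fun _ _ => hZ_nonneg _ _)
            (isStoppingTime_dyadicCeil j hτ) hbound (countable_range_dyadicCeil τ j)
      _ = ∫⁻ ω, ENNReal.ofReal (Z 0 ω) ∂μ :=
          lintegral_congr fun ω => by
            rw [stoppedProcess_eq_of_le (τ := fun ω => (σ k ω : WithTop ℝ≥0))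
              (WithTop.coe_le_coe.2 zero_le)]
  have hlocal : ∀ k, ∫⁻ ω, ENNReal.ofReal (Z (min (τ ω) (σ k ω)) ω) ∂μ
      ≤ ∫⁻ ω, ENNReal.ofReal (Z 0 ω) ∂μ := fun k =>
    lintegral_le_of_tendsto_of_forall_le (fun j => hmeas (isStoppingTime_dyadicCeil j hτ) k)
      (fun ω => (ENNReal.continuous_ofReal.tendsto _).comp <| ((hcont ω).tendsto _).comp <|
        (tendsto_dyadicCeil τ ω).min tendsto_const_nhds)
      (fun j => (hdyadic j k).le)
  refine lintegral_le_of_tendsto_of_forall_le (hmeas hτ) (fun ω => ?_) hlocal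
  refine tendsto_const_nhds.congr' ?_
  filter_upwards [(hσ_top ω).eventually_ge_atTop (τ ω)] with k hk
  rw [min_eq_left hk]

end OptionalSampling

section NovikovKazamaki

variable {ℱ : Filtration ℝ≥0 m} {μ : Measure Ω} {L Q Z : ℝ≥0 → Ω → ℝ}

lemma sproc_nonneg (a : ℝ) (φ : ℝ → ℝ) (t : ℝ≥0) (ω : Ω) : 0 ≤ Sproc L Q Z a φ t ω := by
  unfold Sproc
  split_ifs
  exacts [(Real.exp_pos _).le, le_rfl]

lemma StochExpSetup.lt_firstHit_of_pos (hs : StochExpSetup ℱ μ L Q Z) {t : ℝ≥0} {ω : Ω}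
    (hZ : 0 < Z t ω) : (t : ℝ≥0∞) < firstHit Z 0 ω := by
  by_contra! h
  exact hZ.ne' (hs.absorbed t ω h)

lemma StochExpSetup.sproc_le_convex_comb (hs : StochExpSetup ℱ μ L Q Z) {a e θ : ℝ}
    (hθ₀ : 0 ≤ θ) (hθ₁ : θ ≤ 1) (he : e - 1 = θ * (a - 1)) (φ : ℝ → ℝ) (t : ℝ≥0) (ω : Ω) :
    Sproc L Q Z e φ t ω ≤ θ * Sproc L Q Z a φ t ω + (1 - θ) * Z t ω := by
  by_cases hZ : 0 < Z t ω
  swap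
  · simp only [Sproc, if_neg hZ]
    have := sproc_nonneg (L := L) (Q := Q) (Z := Z) a φ t ω
    nlinarith [hs.nonneg t ω]
  have hexponent : e * L t ω + (1 / 2 - e) * Q t ω - |e - 1| * φ (Q t ω)
      = θ * (a * L t ω + (1 / 2 - a) * Q t ω - |a - 1| * φ (Q t ω))
        + (1 - θ) * (L t ω - Q t ω / 2) := by
    rw [he, abs_mul, abs_of_nonneg hθ₀]
    linear_combination (L t ω - Q t ω) * he
  rw [Sproc, Sproc, if_pos hZ, if_pos hZ, hexponent, hs.expEq t ω (hs.lt_firstHit_of_pos hZ)]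
  simpa only [smul_eq_mul] using convexOn_exp.2 (mem_univ _) (mem_univ _) hθ₀
    (sub_nonneg.2 hθ₁) (add_sub_cancel θ 1)

lemma StochExpSetup.lintegral_ofReal_apply_le_one [IsProbabilityMeasure μ]
    (hs : StochExpSetup ℱ μ L Q Z) {τ : Ω → ℝ≥0}
    (hτ : IsStoppingTime ℱ fun ω => (τ ω : WithTop ℝ≥0)) {n : ℝ≥0} (hτn : ∀ ω, τ ω ≤ n) :
    ∫⁻ ω, ENNReal.ofReal (Z (τ ω) ω) ∂μ ≤ 1 := by
  simpa [hs.init] using hs.locmartZ.lintegral_ofReal_apply_le hs.adaptedZ hs.contZ hs.nonneg hτ hτn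

lemma StochExpSetup.lintegral_sproc_le [IsProbabilityMeasure μ] (hs : StochExpSetup ℱ μ L Q Z)
    {a e θ : ℝ} (hθ₀ : 0 ≤ θ) (hθ₁ : θ ≤ 1) (he : e - 1 = θ * (a - 1)) (φ : ℝ → ℝ)
    {τ : Ω → ℝ≥0} (hτ : IsStoppingTime ℱ fun ω => (τ ω : WithTop ℝ≥0)) {n : ℝ≥0}
    (hτn : ∀ ω, τ ω ≤ n) :
    ∫⁻ ω, ENNReal.ofReal (Sproc L Q Z e φ (τ ω) ω) ∂μ
      ≤ ENNReal.ofReal θ * ∫⁻ ω, ENNReal.ofReal (Sproc L Q Z a φ (τ ω) ω) ∂μ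
        + ENNReal.ofReal (1 - θ) := by
  have hZτ : Measurable fun ω => ENNReal.ofReal (Z (τ ω) ω) :=
    (measurable_apply_of_isStoppingTime hs.adaptedZ hs.contZ hτ).ennreal_ofReal
  calc ∫⁻ ω, ENNReal.ofReal (Sproc L Q Z e φ (τ ω) ω) ∂μ
      ≤ ∫⁻ ω, (ENNReal.ofReal θ * ENNReal.ofReal (Sproc L Q Z a φ (τ ω) ω)
          + ENNReal.ofReal (1 - θ) * ENNReal.ofReal (Z (τ ω) ω)) ∂μ := by
        refine lintegral_mono fun ω => ?_
        rw [← ENNReal.ofReal_mul hθ₀, ← ENNReal.ofReal_mul (sub_nonneg.2 hθ₁)]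
        exact (ENNReal.ofReal_le_ofReal (hs.sproc_le_convex_comb hθ₀ hθ₁ he φ (τ ω) ω)).trans
          ENNReal.ofReal_add_le
    _ = ENNReal.ofReal θ * ∫⁻ ω, ENNReal.ofReal (Sproc L Q Z a φ (τ ω) ω) ∂μ
          + ENNReal.ofReal (1 - θ) * ∫⁻ ω, ENNReal.ofReal (Z (τ ω) ω) ∂μ := by
        rw [lintegral_add_right' _ (hZτ.const_mul _).aemeasurable,
          lintegral_const_mul' _ _ ENNReal.ofReal_ne_top, lintegral_const_mul _ hZτ]
    _ ≤ ENNReal.ofReal θ * ∫⁻ ω, ENNReal.ofReal (Sproc L Q Z a φ (τ ω) ω) ∂μ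
          + ENNReal.ofReal (1 - θ) := by
        grw [hs.lintegral_ofReal_apply_le_one hτ hτn, mul_one]

lemma MemT.exists_forall_le {ℱ : Filtration ℝ≥0 m} {T : ℝ≥0∞} {τ : Ω → ℝ≥0} (hτ : MemT ℱ T τ) :
    ∃ n : ℝ≥0, ∀ ω, τ ω ≤ n := by
  obtain ⟨-, n, -, hn⟩ := hτ
  exact ⟨n, fun ω => by exact_mod_cast (hn ω).trans inf_le_right⟩

theorem StochExpSetup.nkCond_of_mem_uIcc [IsProbabilityMeasure μ] (hs : StochExpSetup ℱ μ L Q Z)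
    {T : ℝ≥0∞} {φ : ℝ → ℝ} {a e : ℝ} (he : e ∈ uIcc 1 a) (ha : NKCond ℱ μ L Q Z T a φ) :
    NKCond ℱ μ L Q Z T e φ := by
  rw [← segment_eq_uIcc] at he
  obtain ⟨p, θ, hp, hθ₀, hpθ, rfl⟩ := he
  have hθ₁ : θ ≤ 1 := by linarith
  refine lt_of_le_of_lt (iSup_le fun τ => ?_) (ENNReal.add_lt_top.2
    ⟨ENNReal.mul_lt_top (ENNReal.ofReal_lt_top (r := θ)) ha, ENNReal.ofReal_lt_top (r := 1 - θ)⟩)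
  obtain ⟨n, hτn⟩ := τ.2.exists_forall_le
  have hθ : p • 1 + θ • a - 1 = θ * (a - 1) := by
    simp only [smul_eq_mul]
    linear_combination hpθ
  refine (hs.lintegral_sproc_le hθ₀ hθ₁ hθ φ τ.2.1 hτn).trans ?_
  gcongr
  exact le_iSup (fun τ : {τ : Ω → ℝ≥0 // MemT ℱ T τ} =>
    ∫⁻ ω, ENNReal.ofReal (Sproc L Q Z a φ (τ.1 ω) ω) ∂μ) τ

end NovikovKazamaki

theorem novikov_kazamaki_orders_general
    {Ω : Type*} {m : MeasurableSpace Ω} (ℱ : Filtration ℝ≥0 m) (μ : Measure Ω)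
    [IsProbabilityMeasure μ] (T : ℝ≥0∞)
    (φ : ℝ → ℝ)
    (a b c d : ℝ) (hab : a < b) (hb1 : b < 1) (h1c : 1 < c) (hcd : c < d) :
    ∀ L Q Z : ℝ≥0 → Ω → ℝ, StochExpSetup ℱ μ L Q Z →
      (NKCond ℱ μ L Q Z T a φ → NKCond ℱ μ L Q Z T b φ) ∧
      (NKCond ℱ μ L Q Z T d φ → NKCond ℱ μ L Q Z T c φ) := fun _ _ _ hs =>
  ⟨hs.nkCond_of_mem_uIcc (mem_uIcc.2 (Or.inr ⟨hab.le, hb1.le⟩)),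
    hs.nkCond_of_mem_uIcc (mem_uIcc.2 (Or.inl ⟨h1c.le, hcd.le⟩))⟩

/-- Corollary (Novikov-Kazamaki orders): for `a < b < 1 < c < d` and any continuous lower
function `φ`, one has `𝒩𝒦^φ(a) ⊆ 𝒩𝒦^φ(b)` and `𝒩𝒦^φ(d) ⊆ 𝒩𝒦^φ(c)`, where
`L ∈ 𝒩𝒦^φ(e)` iff `sup_{τ ∈ 𝒯} E[S^{L,e,φ}_τ] < ∞`. -/
theorem novikov_kazamaki_orders
    {Ω : Type*} {m : MeasurableSpace Ω} (ℱ : Filtration ℝ≥0 m) (μ : Measure Ω)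
    [IsProbabilityMeasure μ] (T : ℝ≥0∞)
    (φ : ℝ → ℝ) (hφcont : ContinuousOn φ (Ici 0)) (hφlow : IsLowerFunction φ)
    (a b c d : ℝ) (hab : a < b) (hb1 : b < 1) (h1c : 1 < c) (hcd : c < d) :
    ∀ L Q Z : ℝ≥0 → Ω → ℝ, StochExpSetup ℱ μ L Q Z →
      (NKCond ℱ μ L Q Z T a φ → NKCond ℱ μ L Q Z T b φ) ∧
      (NKCond ℱ μ L Q Z T d φ → NKCond ℱ μ L Q Z T c φ) :=
  novikov_kazamaki_orders_general ℱ μ T φ a b c d hab hb1 h1c hcd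

end PaperNK
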